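/- Let 𝓡 be right amenable, let ℱ be a right Følner net in 𝓡, let M be infinite, let X be a non-empty subshift of Q^M, let Y be a strongly irreducible subshift of Q^M, and let Δ be a local map from X to Y that is not surjective. Then Ent_ℱ(Δ(X)) < Ent_ℱ(Y). -/

import Mathlib

open Filter Set

namespace GoE

variable {G M Q : Type*}

/-- A left homogeneous space `⟨M, G, ▷⟩` together with a coordinate system
`⟨m₀, (g_{m₀,m})_{m∈M}⟩`: a cell space with finite stabiliser `G₀` of `m₀`. -/
structure CellSpace (G M : Type*) [Group G] where
  act : G → M → M
  one_act : ∀ m : M, act 1 m = m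
  mul_act : ∀ (g h : G) (m : M), act (g * h) m = act g (act h m)
  transitive : ∀ m m' : M, ∃ g : G, act g m = m'
  m0 : M
  coord : M → G
  coord_act : ∀ m : M, act (coord m) m0 = m
  stab_finite : {g : G | act g m0 = m0}.Finite

variable [Group G]

namespace CellSpace

/-- Membership in the stabiliser `G₀` of `m₀`. -/
def stab (R : CellSpace G M) (g : G) : Prop := R.act g R.m0 = R.m0

/-- The induced right semi-action `m ↝ gG₀ = g_{m₀,m} g ▷ m₀`, on representatives. -/
def sAct (R : CellSpace G M) (m : M) (g : G) : M := R.act (R.coord m * g) R.m0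

/-- `m ↝ ι n` where `ι : M → G/G₀`, `n ↦ G_{m₀,n}` is the canonical identification. -/
def nAct (R : CellSpace G M) (m n : M) : M := R.act (R.coord m * R.coord n) R.m0

/-- `S ⊆ G` represents a finite symmetric right generating set of cosets
(`G₀ · S ⊆ S`, `S⁻¹ ⊆ S`, and `S` generates). -/
structure IsRightGenSet (R : CellSpace G M) (S : Set G) : Prop where
  finite : S.Finite
  saturated : ∀ s ∈ S, ∀ g₀ : G, R.stab g₀ → s * g₀ ∈ S
  stab_mul : ∀ g₀ : G, R.stab g₀ → ∀ s ∈ S, g₀ * s ∈ S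
  symm : ∀ s ∈ S, s⁻¹ ∈ S
  generates : ∀ m : M, ∃ (k : ℕ) (f : ℕ → M), f 0 = R.m0 ∧ f k = m ∧
    ∀ i < k, ∃ s ∈ S, f (i + 1) = R.sAct (f i) s

/-- There is an `S`-path of length `n` from `m` to `m'` in the `S`-Cayley graph. -/
def Chain (R : CellSpace G M) (S : Set G) (m m' : M) (n : ℕ) : Prop :=
  ∃ f : ℕ → M, f 0 = m ∧ f n = m' ∧ ∀ i < n, ∃ s ∈ S, f (i + 1) = R.sAct (f i) s

/-- The `S`-metric `d`. -/
noncomputable def dist (R : CellSpace G M) (S : Set G) (m m' : M) : ℕ :=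
  sInf {n : ℕ | R.Chain S m m' n}

/-- The ball `B(m, ρ)` of radius `ρ` centred at `m`. -/
noncomputable def ball (R : CellSpace G M) (S : Set G) (m : M) (ρ : ℕ) : Set M :=
  {m' : M | R.dist S m m' ≤ ρ}

/-- The `θ`-interior `A^{-θ}` of `A`. -/
noncomputable def inter (R : CellSpace G M) (S : Set G) (A : Set M) (θ : ℕ) : Set M :=
  {m ∈ A | R.ball S m θ ⊆ A}

/-- The `θ`-closure `A^{+θ}` of `A`. -/
noncomputable def clos (R : CellSpace G M) (S : Set G) (A : Set M) (θ : ℕ) : Set M :=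
  {m : M | (R.ball S m θ ∩ A).Nonempty}

/-- The external `θ`-boundary `∂θ⁺A = A^{+θ} ∖ A`. -/
noncomputable def extB (R : CellSpace G M) (S : Set G) (A : Set M) (θ : ℕ) : Set M :=
  R.clos S A θ \ A

/-- The internal `θ`-boundary `∂θ⁻A = A ∖ A^{-θ}`. -/
noncomputable def intB (R : CellSpace G M) (S : Set G) (A : Set M) (θ : ℕ) : Set M :=
  A \ R.inter S A θ

/-- The `θ`-boundary `∂θA = A^{+θ} ∖ A^{-θ}`. -/
noncomputable def bdry (R : CellSpace G M) (S : Set G) (A : Set M) (θ : ℕ) : Set M :=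
  R.clos S A θ \ R.inter S A θ

end CellSpace

/-- The set `X_A` of restrictions to `A` of the elements of `X`. -/
def restr (A : Set M) (X : Set (M → Q)) : Set (A → Q) :=
  (fun x : M → Q => A.restrict x) '' X

/-- The pattern `p` (with domain `A`) semi-occurs in the configuration `c`:
there is `h ∈ H` with `h ⊛ p = c↾_{h ▷ dom p}`. -/
def SemiOccurs (R : CellSpace G M) (H : Subgroup G) {A : Set M} (p : A → Q)
    (c : M → Q) : Prop :=
  ∃ h ∈ H, ∀ a : A, c (R.act h ↑a) = p a

/-- The pattern `p` (with domain `A`) occurs at `t` in the configuration `c`: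
`t ⊛' p = c↾_{t ↝ A}`. -/
def OccursAt (R : CellSpace G M) {A : Set M} (p : A → Q) (t : M) (c : M → Q) : Prop :=
  ∀ a : A, c (R.nAct t ↑a) = p a

/-- The pattern `p` is allowed in `X`: it semi-occurs in some point of `X`. -/
def Allowed (R : CellSpace G M) (H : Subgroup G) (X : Set (M → Q)) {A : Set M}
    (p : A → Q) : Prop :=
  ∃ x ∈ X, SemiOccurs R H p x

/-- The set `⟨𝔉⟩` generated by a set `𝔉` of forbidden patterns. -/
def Generated (R : CellSpace G M) (H : Subgroup G) (𝔉 : Set (Σ A : Set M, A → Q)) :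
    Set (M → Q) :=
  {c : M → Q | ∀ f ∈ 𝔉, ¬ SemiOccurs R H f.2 c}

/-- `X` is a subshift of `Q^M`: it is generated by a set of blocks. -/
def IsSubshift (R : CellSpace G M) (H : Subgroup G) (X : Set (M → Q)) : Prop :=
  ∃ 𝔉 : Set (Σ A : Set M, A → Q), (∀ f ∈ 𝔉, f.1.Finite) ∧ X = Generated R H 𝔉

/-- `X` is a subshift of finite type: it is generated by a finite set of blocks. -/
def IsSubshiftFT (R : CellSpace G M) (H : Subgroup G) (X : Set (M → Q)) : Prop :=
  ∃ 𝔉 : Set (Σ A : Set M, A → Q), 𝔉.Finite ∧ (∀ f ∈ 𝔉, f.1.Finite) ∧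
    X = Generated R H 𝔉

/-- `X` is a `κ`-step subshift: it is generated by a set of `B(κ)`-blocks. -/
def IsStep (R : CellSpace G M) (S : Set G) (H : Subgroup G) (X : Set (M → Q))
    (κ : ℕ) : Prop :=
  ∃ 𝔉 : Set (Σ A : Set M, A → Q), (∀ f ∈ 𝔉, f.1 = R.ball S R.m0 κ) ∧
    X = Generated R H 𝔉

/-- `X` is `κ`-strongly irreducible. -/
def IsStronglyIrr (R : CellSpace G M) (S : Set G) (H : Subgroup G)
    (X : Set (M → Q)) (κ : ℕ) : Prop :=
  ∀ (A B : Set M), A.Finite → B.Finite → ∀ (p : A → Q) (p' : B → Q),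
    Allowed R H X p → Allowed R H X p' →
    (∀ a ∈ A, ∀ b ∈ B, κ + 1 ≤ R.dist S a b) →
    ∃ x ∈ X, A.restrict x = p ∧ B.restrict x = p'

/-- `X` has `ρ`-bounded propagation. -/
def HasBoundedProp (R : CellSpace G M) (S : Set G) (X : Set (M → Q)) (ρ : ℕ) : Prop :=
  ∀ F : Set M, F.Finite → ∀ p : F → Q,
    (∀ f ∈ F, ∃ x ∈ X, ∀ (m : M) (hm : m ∈ R.ball S f ρ ∩ F), p ⟨m, hm.2⟩ = x m) →
    ∃ x ∈ X, F.restrict x = p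

/-- `Δ` is a `κ`-local map from `X` to `Y`. -/
def IsLocalMap (R : CellSpace G M) (S : Set G) (H : Subgroup G)
    (X Y : Set (M → Q)) (Δ : (M → Q) → (M → Q)) (κ : ℕ) : Prop :=
  Set.MapsTo Δ X Y ∧
  ∃ N : Set M, N ⊆ R.ball S R.m0 κ ∧
    (∀ g₀ : G, R.stab g₀ → ∀ n ∈ N, R.act g₀ n ∈ N) ∧
    ∃ δ : (N → Q) → Q,
      (∀ h₀ ∈ H, R.stab h₀ →
        ∀ ℓ ∈ restr N X, ∀ ℓ' : N → Q,
          (∀ (n : M) (hn : n ∈ N) (hn' : R.act h₀⁻¹ n ∈ N),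
            ℓ' ⟨n, hn⟩ = ℓ ⟨R.act h₀⁻¹ n, hn'⟩) →
          δ ℓ' = δ ℓ) ∧
      ∀ x ∈ X, ∀ m : M, Δ x m = δ (fun n : N => x (R.nAct m ↑n))

/-- `Δ` is pre-injective on `X`. -/
def PreInjective (X : Set (M → Q)) (Δ : (M → Q) → (M → Q)) : Prop :=
  ∀ x ∈ X, ∀ x' ∈ X, Δ x = Δ x' → {m : M | x m ≠ x' m}.Finite → x = x'

/-- The cell space `R` is right amenable: there is a finitely additive probability
measure on the power set of `M` that is semi-invariant under the right semi-action. -/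
def RightAmenable (R : CellSpace G M) : Prop :=
  ∃ μ : Set M → ℝ, (∀ A : Set M, 0 ≤ μ A) ∧ μ Set.univ = 1 ∧
    (∀ A B : Set M, Disjoint A B → μ (A ∪ B) = μ A + μ B) ∧
    ∀ (g : G) (A : Set M), Set.InjOn (fun m => R.sAct m g) A →
      μ ((fun m => R.sAct m g) '' A) = μ A

/-- `F` is a right Følner net in `R` (indexed by the directed set `I`). -/
def IsFolnerNet (R : CellSpace G M) (S : Set G) {I : Type*} [Preorder I]
    (F : I → Set M) : Prop :=
  (∀ i, (F i).Nonempty) ∧ (∀ i, (F i).Finite) ∧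
  ∀ ρ : ℕ, Tendsto (fun i => ((R.bdry S (F i) ρ).ncard : ℝ) / ((F i).ncard : ℝ))
    atTop (nhds 0)

/-- The entropy of `X ⊆ Q^M` with respect to the net `F`:
`limsup_i log|X_{F_i}| / |F_i|`. -/
noncomputable def entropy (R : CellSpace G M) (S : Set G) {I : Type*} [Preorder I]
    (F : I → Set M) (X : Set (M → Q)) : ℝ :=
  limsup (fun i => Real.log ((restr (F i) X).ncard : ℝ) / ((F i).ncard : ℝ)) atTop

/-- `T` is a `⟨θ, κ, θ'⟩`-tiling of `R`. -/
def IsTiling (R : CellSpace G M) (S : Set G) (θ κ θ' : ℕ) (T : Set M) : Prop :=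
  (∀ t ∈ T, ∀ t' ∈ T, t ≠ t' →
    ∀ a ∈ R.ball S t θ, ∀ b ∈ R.ball S t' θ, κ + 1 ≤ R.dist S a b) ∧
  ∀ m : M, ∃ t ∈ T, m ∈ R.ball S t θ'

/-- The action `h ⊛ c` of `h ∈ G` on configurations: `(h ⊛ c)(m) = c(h⁻¹ ▷ m)`. -/
def shiftAct (R : CellSpace G M) (h : G) (c : M → Q) : M → Q :=
  fun m => c (R.act h⁻¹ m)

/-!
Pick `y ∈ Y ∖ Δ(X)`. Since `Δ(X)` is closed and `H`-invariant, there is a radius `θ` such that no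
point of `Δ(X)` agrees with the translate `g_{m₀,t} ⊛ y` on `B(t, θ)`, for any cell `t`. Let `κ` be
an irreducibility constant of `Y` and `T` a maximal `(2θ + κ + 1)`-separated set of cells. For a
finite `F` containing the balls `B(t, θ + κ)` of `n` tiles `t ∈ T`, strong irreducibility glues the
translate of `y` into `B(t, θ)` at the cost of changing a pattern only on `B(t, θ + κ)`; hence the
`F`-patterns of `Y` that avoid `y` at all these tiles are at most a fraction `(D / (D + 1)) ^ n`
of `Y_F`, where `D = |Q| ^ |B(θ + κ)|`. Every Følner set `F` contains `≳ |F|` such tiles, so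
`log |Δ(X)_F| / |F| ≤ log |Y_F| / |F| - c` for a fixed `c > 0`, eventually.
-/

namespace CellSpace

variable (R : CellSpace G M) {S : Set G}

@[simp]
lemma act_inv_act (g : G) (m : M) : R.act g⁻¹ (R.act g m) = m := by
  rw [← R.mul_act, inv_mul_cancel, R.one_act]

@[simp]
lemma act_act_inv (g : G) (m : M) : R.act g (R.act g⁻¹ m) = m := by
  rw [← R.mul_act, mul_inv_cancel, R.one_act]

lemma act_injective (g : G) : Function.Injective (R.act g) := fun a b hab => by
  simpa using congrArg (R.act g⁻¹) hab

@[simp]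
lemma act_coord_inv (m : M) : R.act (R.coord m)⁻¹ m = R.m0 := by
  simpa [R.coord_act] using R.act_inv_act (R.coord m) R.m0

lemma nAct_eq (m n : M) : R.nAct m n = R.act (R.coord m) n := by
  rw [nAct, R.mul_act, R.coord_act]

variable {R} in
lemma stab_inv {g : G} (h : R.stab g) : R.stab g⁻¹ := by
  rw [stab, ← h, R.act_inv_act, h]

def Adj (S : Set G) (m m' : M) : Prop := ∃ s ∈ S, m' = R.sAct m s

variable {R}

lemma Adj.symm (hS : R.IsRightGenSet S) {m m' : M} (h : R.Adj S m m') : R.Adj S m' m := by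
  obtain ⟨s, hs, rfl⟩ := h
  set g₀ := (R.coord m * s)⁻¹ * R.coord (R.sAct m s)
  have hg₀ : R.stab g₀ := by
    rw [stab, R.mul_act, R.coord_act, sAct, R.act_inv_act]
  refine ⟨g₀⁻¹ * s⁻¹, hS.stab_mul _ (stab_inv hg₀) _ (hS.symm s hs), ?_⟩
  rw [sAct]
  conv_lhs => rw [← R.coord_act m]
  congr 1
  simp only [g₀]
  group

lemma Adj.act (hS : R.IsRightGenSet S) (g : G) {m m' : M} (h : R.Adj S m m') :
    R.Adj S (R.act g m) (R.act g m') := by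
  obtain ⟨s, hs, rfl⟩ := h
  set g₀ := (R.coord (R.act g m))⁻¹ * g * R.coord m
  have hg₀ : R.stab g₀ := by
    rw [stab, R.mul_act, R.mul_act, R.coord_act, R.act_coord_inv]
  refine ⟨g₀ * s, hS.stab_mul _ hg₀ s hs, ?_⟩
  rw [sAct, sAct, ← R.mul_act]
  congr 1
  simp only [g₀]
  group

lemma chain_zero_iff {m m' : M} : R.Chain S m m' 0 ↔ m = m' :=
  ⟨fun ⟨f, h0, h1, _⟩ => h0 ▸ h1, fun h => ⟨fun _ => m, rfl, h, fun _ hi => absurd hi (by omega)⟩⟩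

lemma chain_succ_iff {m m' : M} {n : ℕ} :
    R.Chain S m m' (n + 1) ↔ ∃ w, R.Chain S m w n ∧ R.Adj S w m' := by
  constructor
  · rintro ⟨f, h0, hn, hf⟩
    obtain ⟨s, hs, e⟩ := hf n (lt_add_one n)
    exact ⟨f n, ⟨f, h0, rfl, fun i hi => hf i (by omega)⟩, s, hs, hn ▸ e⟩
  · rintro ⟨w, ⟨f, h0, hn, hf⟩, s, hs, rfl⟩
    refine ⟨fun i => if i ≤ n then f i else R.sAct w s, by simp [h0], by simp, fun i hi => ?_⟩
    rcases (Nat.lt_succ_iff.mp hi).lt_or_eq with hi | rfl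
    · obtain ⟨s', hs', e⟩ := hf i hi
      exact ⟨s', hs', by simp [hi.le, Nat.succ_le_of_lt hi, e]⟩
    · exact ⟨s, hs, by simp [hn]⟩

lemma chain_one_iff {m m' : M} : R.Chain S m m' 1 ↔ R.Adj S m m' := by
  simp [chain_succ_iff, chain_zero_iff]

lemma Chain.trans {m m' m'' : M} {a b : ℕ} (h : R.Chain S m m' a) (h' : R.Chain S m' m'' b) :
    R.Chain S m m'' (a + b) := by
  induction b generalizing m'' with
  | zero => rwa [chain_zero_iff.mp h'] at h
  | succ b ih =>
    obtain ⟨w, hw, hadj⟩ := chain_succ_iff.mp h'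
    exact chain_succ_iff.mpr ⟨w, ih hw, hadj⟩

lemma Chain.symm (hS : R.IsRightGenSet S) {m m' : M} {n : ℕ} (h : R.Chain S m m' n) :
    R.Chain S m' m n := by
  induction n generalizing m' with
  | zero => exact chain_zero_iff.mpr (chain_zero_iff.mp h).symm
  | succ n ih =>
    obtain ⟨w, hw, hadj⟩ := chain_succ_iff.mp h
    rw [add_comm]
    exact (chain_one_iff.mpr (hadj.symm hS)).trans (ih hw)

lemma Chain.act (hS : R.IsRightGenSet S) (g : G) {m m' : M} {n : ℕ} (h : R.Chain S m m' n) :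
    R.Chain S (R.act g m) (R.act g m') n := by
  induction n generalizing m' with
  | zero => exact chain_zero_iff.mpr (congrArg _ (chain_zero_iff.mp h))
  | succ n ih =>
    obtain ⟨w, hw, hadj⟩ := chain_succ_iff.mp h
    exact chain_succ_iff.mpr ⟨_, ih hw, hadj.act hS g⟩

lemma exists_chain (hS : R.IsRightGenSet S) (m m' : M) : ∃ n, R.Chain S m m' n := by
  obtain ⟨a, ha⟩ := hS.generates m
  obtain ⟨b, hb⟩ := hS.generates m'
  exact ⟨a + b, (Chain.symm hS ha).trans hb⟩

lemma chain_dist (hS : R.IsRightGenSet S) (m m' : M) : R.Chain S m m' (R.dist S m m') :=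
  Nat.sInf_mem (exists_chain hS m m')

lemma dist_le {m m' : M} {n : ℕ} (h : R.Chain S m m' n) : R.dist S m m' ≤ n :=
  Nat.sInf_le h

@[simp]
lemma dist_self (m : M) : R.dist S m m = 0 :=
  Nat.le_zero.mp (dist_le (chain_zero_iff.mpr rfl))

lemma dist_triangle (hS : R.IsRightGenSet S) (m m' m'' : M) :
    R.dist S m m'' ≤ R.dist S m m' + R.dist S m' m'' :=
  dist_le ((chain_dist hS m m').trans (chain_dist hS m' m''))

lemma dist_comm (hS : R.IsRightGenSet S) (m m' : M) : R.dist S m m' = R.dist S m' m :=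
  le_antisymm (dist_le ((chain_dist hS m' m).symm hS)) (dist_le ((chain_dist hS m m').symm hS))

@[simp]
lemma dist_act (hS : R.IsRightGenSet S) (g : G) (m m' : M) :
    R.dist S (R.act g m) (R.act g m') = R.dist S m m' := by
  refine le_antisymm (dist_le ((chain_dist hS m m').act hS g)) ?_
  simpa using dist_le ((chain_dist hS (R.act g m) (R.act g m')).act hS g⁻¹)

lemma mem_ball {m m' : M} {ρ : ℕ} : m' ∈ R.ball S m ρ ↔ R.dist S m m' ≤ ρ := Iff.rfl

lemma self_mem_ball (m : M) (ρ : ℕ) : m ∈ R.ball S m ρ := by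
  simp [mem_ball]

lemma ball_mono (m : M) {ρ ρ' : ℕ} (h : ρ ≤ ρ') : R.ball S m ρ ⊆ R.ball S m ρ' :=
  fun _ hx => hx.trans h

lemma ball_succ_subset (hS : R.IsRightGenSet S) (m : M) (ρ : ℕ) :
    R.ball S m (ρ + 1) ⊆ R.ball S m ρ ∪ ⋃ w ∈ R.ball S m ρ, R.sAct w '' S := by
  intro m' hm'
  rcases (mem_ball.mp hm').lt_or_eq with h | h
  · exact Or.inl (Nat.lt_succ_iff.mp h)
  · have hchain := chain_dist hS m m'
    rw [h] at hchain
    obtain ⟨w, hw, s, hs, rfl⟩ := chain_succ_iff.mp hchain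
    exact Or.inr (mem_biUnion (dist_le hw) ⟨s, hs, rfl⟩)

lemma ball_finite (hS : R.IsRightGenSet S) (m : M) (ρ : ℕ) : (R.ball S m ρ).Finite := by
  induction ρ with
  | zero =>
    refine (finite_singleton m).subset fun m' hm' => ?_
    exact (chain_zero_iff.mp (Nat.le_zero.mp hm' ▸ chain_dist hS m m')).symm
  | succ ρ ih =>
    exact (ih.union (ih.biUnion fun w _ => hS.finite.image _)).subset (ball_succ_subset hS m ρ)

lemma image_act_ball (hS : R.IsRightGenSet S) (g : G) (m : M) (ρ : ℕ) :
    R.act g '' R.ball S m ρ = R.ball S (R.act g m) ρ := by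
  ext m'
  refine ⟨?_, fun h => ⟨R.act g⁻¹ m', ?_, R.act_act_inv g m'⟩⟩
  · rintro ⟨a, ha, rfl⟩
    simpa [mem_ball, dist_act hS] using ha
  · rwa [mem_ball, ← dist_act hS g, R.act_act_inv]

lemma ncard_ball (hS : R.IsRightGenSet S) (m : M) (ρ : ℕ) :
    (R.ball S m ρ).ncard = (R.ball S R.m0 ρ).ncard := by
  rw [← R.coord_act m, ← image_act_ball hS, ncard_image_of_injective _ (R.act_injective _)]

lemma clos_finite (hS : R.IsRightGenSet S) {A : Set M} (hA : A.Finite) (ρ : ℕ) :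
    (R.clos S A ρ).Finite := by
  refine (hA.biUnion fun a _ => ball_finite hS a ρ).subset ?_
  rintro m ⟨a, ha, haA⟩
  exact mem_biUnion haA (by rwa [mem_ball, dist_comm hS])

lemma disjoint_ball_ball (hS : R.IsRightGenSet S) {t t' : M} {ρ ρ' : ℕ}
    (h : ρ + ρ' + 1 ≤ R.dist S t t') : Disjoint (R.ball S t ρ) (R.ball S t' ρ') := by
  refine disjoint_left.mpr fun a ha ha' => ?_
  have := dist_triangle hS t a t'
  rw [dist_comm hS a t'] at this
  have : R.dist S t a ≤ ρ := ha
  have : R.dist S t' a ≤ ρ' := ha'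
  omega

lemma exists_separated_net (hS : R.IsRightGenSet S) {D : ℕ} (hD : 0 < D) :
    ∃ T : Set M, T.Pairwise (fun t t' => D ≤ R.dist S t t') ∧ ∀ m, ∃ t ∈ T, R.dist S t m < D := by
  obtain ⟨T, hT⟩ := zorn_subset {T : Set M | T.Pairwise fun t t' => D ≤ R.dist S t t'}
    fun c hc hchain => ⟨⋃₀ c, hchain.pairwise_sUnion.mpr hc, fun _ => subset_sUnion_of_mem⟩
  refine ⟨T, hT.prop, fun m => ?_⟩
  by_contra! hfar
  have hmT : m ∉ T := fun hm => by simpa using (hfar m hm).trans_lt' hD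
  have hins : (insert m T).Pairwise fun t t' => D ≤ R.dist S t t' :=
    hT.prop.insert fun t ht _ => ⟨dist_comm hS t m ▸ hfar t ht, hfar t ht⟩
  exact hmT (hT.eq_of_subset hins (subset_insert m T) ▸ mem_insert m T)

lemma inter_subset_biUnion_ball (hS : R.IsRightGenSet S) {T : Set M} {r : ℕ}
    (hT : ∀ m, ∃ t ∈ T, R.dist S t m ≤ r) (F : Set M) (ρ : ℕ) :
    R.inter S F (ρ + r) ⊆ ⋃ t ∈ {t ∈ T | R.ball S t ρ ⊆ F}, R.ball S t r := by
  intro m hm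
  obtain ⟨t, ht, htm⟩ := hT m
  refine mem_biUnion ⟨ht, fun a ha => hm.2 ?_⟩ htm
  have := dist_triangle hS m t a
  rw [dist_comm hS m t] at this
  have : R.dist S t a ≤ ρ := ha
  show R.dist S m a ≤ ρ + r
  omega

lemma ncard_le_card_mul_add_ncard_bdry (hS : R.IsRightGenSet S) {F : Set M} (hF : F.Finite)
    {T : Finset M} {ρ r : ℕ} (hT : R.inter S F ρ ⊆ ⋃ t ∈ T, R.ball S t r) :
    F.ncard ≤ T.card * (R.ball S R.m0 r).ncard + (R.bdry S F ρ).ncard := by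
  have hsplit : F ⊆ R.inter S F ρ ∪ R.bdry S F ρ := fun m hm => by
    by_cases h : m ∈ R.inter S F ρ
    · exact Or.inl h
    · exact Or.inr ⟨⟨m, self_mem_ball m ρ, hm⟩, h⟩
  have hfin : (R.inter S F ρ ∪ R.bdry S F ρ).Finite :=
    (hF.subset (sep_subset _ _)).union ((clos_finite hS hF ρ).subset sdiff_subset)
  have hinter : (R.inter S F ρ).ncard ≤ T.card * (R.ball S R.m0 r).ncard :=
    calc (R.inter S F ρ).ncard ≤ (⋃ t ∈ T, R.ball S t r).ncard :=
          ncard_le_ncard hT (T.finite_toSet.biUnion fun t _ => ball_finite hS t r)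
      _ ≤ ∑ t ∈ T, (R.ball S t r).ncard := T.set_ncard_biUnion_le _
      _ = T.card * (R.ball S R.m0 r).ncard := by simp [ncard_ball hS]
  calc F.ncard ≤ (R.inter S F ρ ∪ R.bdry S F ρ).ncard := ncard_le_ncard hsplit hfin
    _ ≤ (R.inter S F ρ).ncard + (R.bdry S F ρ).ncard := ncard_union_le _ _
    _ ≤ _ := by gcongr

end CellSpace

section Shift

variable {R : CellSpace G M} {S : Set G} {H : Subgroup G}

lemma shiftAct_mem_generated {𝔉 : Set (Σ A : Set M, A → Q)} {c : M → Q}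
    (hc : c ∈ Generated R H 𝔉) {h : G} (hh : h ∈ H) : shiftAct R h c ∈ Generated R H 𝔉 := by
  rintro f hf ⟨h', hh', he⟩
  refine hc f hf ⟨h⁻¹ * h', mul_mem (inv_mem hh) hh', fun a => ?_⟩
  rw [R.mul_act]
  exact he a

lemma IsSubshift.shiftAct_mem {X : Set (M → Q)} (hX : IsSubshift R H X) {x : M → Q}
    (hx : x ∈ X) {h : G} (hh : h ∈ H) : shiftAct R h x ∈ X := by
  obtain ⟨𝔉, -, rfl⟩ := hX
  exact shiftAct_mem_generated hx hh

lemma IsLocalMap.map_shiftAct {X Y : Set (M → Q)} {Δ : (M → Q) → (M → Q)} {κ : ℕ}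
    (hΔ : IsLocalMap R S H X Y Δ κ) (hH : ∀ m : M, R.coord m ∈ H) (hX : IsSubshift R H X)
    {h : G} (hh : h ∈ H) {x : M → Q} (hx : x ∈ X) :
    Δ (shiftAct R h x) = shiftAct R h (Δ x) := by
  obtain ⟨-, N, -, hN, δ, hδ, hΔx⟩ := hΔ
  have hδ_stab : ∀ x' ∈ X, ∀ g₀ ∈ H, R.stab g₀ →
      δ (fun n : N => x' (R.act g₀ n)) = δ (N.domRestrict x') := fun x' hx' g₀ hg₀H hg₀ =>
    hδ g₀⁻¹ (inv_mem hg₀H) (CellSpace.stab_inv hg₀) _ ⟨x', hx', rfl⟩ _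
      fun n _ _ => by simp only [inv_inv]; rfl
  funext m
  set m' := R.act h⁻¹ m
  -- `g_{m₀,m'} = h⁻¹ g_{m₀,m} g₀` with `g₀` in the stabiliser
  set g₀ := (R.coord m)⁻¹ * h * R.coord m'
  have hg₀ : R.stab g₀ := by
    simp only [CellSpace.stab, g₀, R.mul_act, R.coord_act, m', R.act_act_inv, R.act_coord_inv]
  have hg₀H : g₀ ∈ H := mul_mem (mul_mem (inv_mem (hH m)) hh) (hH m')
  set x' := shiftAct R ((R.coord m)⁻¹ * h) x
  have hx' : x' ∈ X := hX.shiftAct_mem hx (mul_mem (inv_mem (hH m)) hh)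
  calc Δ (shiftAct R h x) m = δ (N.domRestrict x') := by
        rw [hΔx _ (hX.shiftAct_mem hx hh)]
        congr 1
        funext n
        show x (R.act h⁻¹ (R.nAct m n)) = x (R.act ((R.coord m)⁻¹ * h)⁻¹ n)
        rw [CellSpace.nAct_eq, ← R.mul_act, mul_inv_rev, inv_inv]
    _ = δ (fun n : N => x' (R.act g₀ n)) := (hδ_stab x' hx' g₀ hg₀H hg₀).symm
    _ = shiftAct R h (Δ x) m := by
        rw [shiftAct, hΔx x hx]
        congr 1
        funext n
        simp only [x', shiftAct, CellSpace.nAct_eq, ← R.mul_act, g₀]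
        rw [mul_inv_rev, inv_inv, mul_assoc, mul_assoc, mul_inv_cancel_left, inv_mul_cancel_left]

lemma IsLocalMap.shiftAct_mem_image {X Y : Set (M → Q)} {Δ : (M → Q) → (M → Q)} {κ : ℕ}
    (hΔ : IsLocalMap R S H X Y Δ κ) (hH : ∀ m : M, R.coord m ∈ H) (hX : IsSubshift R H X)
    {h : G} (hh : h ∈ H) {z : M → Q} (hz : z ∈ Δ '' X) : shiftAct R h z ∈ Δ '' X := by
  obtain ⟨x, hx, rfl⟩ := hz
  exact ⟨shiftAct R h x, hX.shiftAct_mem hx hh, hΔ.map_shiftAct hH hX hh hx⟩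

end Shift

lemma exists_finset_forall_ne_of_isClosed {ι : Type*} [TopologicalSpace Q] {Z : Set (ι → Q)}
    (hZ : IsClosed Z) {y : ι → Q} (hy : y ∉ Z) : ∃ A : Finset ι, ∀ z ∈ Z, ∃ a ∈ A, z a ≠ y a := by
  obtain ⟨A, u, hu, hAu⟩ := isOpen_pi_iff.mp hZ.isOpen_compl y hy
  refine ⟨A, fun z hz => ?_⟩
  by_contra! h
  exact hAu (fun a ha => h a ha ▸ (hu a ha).2) hz

section Topology

variable [TopologicalSpace Q] [DiscreteTopology Q] {R : CellSpace G M} {S : Set G}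
  {H : Subgroup G}

lemma isOpen_setOf_semiOccurs {A : Set M} (hA : A.Finite) (p : A → Q) :
    IsOpen {c : M → Q | SemiOccurs R H p c} := by
  have hunion : {c : M → Q | SemiOccurs R H p c} =
      ⋃ h ∈ (H : Set G), ⋂ a : A, (fun c : M → Q => c (R.act h a)) ⁻¹' {p a} := by
    ext c
    simp [SemiOccurs]
  rw [hunion]
  have := hA.to_subtype
  exact isOpen_biUnion fun h _ =>
    isOpen_iInter_of_finite fun a => (isOpen_discrete _).preimage (continuous_apply _)

lemma IsSubshift.isClosed {X : Set (M → Q)} (hX : IsSubshift R H X) : IsClosed X := by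
  obtain ⟨𝔉, h𝔉, rfl⟩ := hX
  have hinter : Generated R H 𝔉 = ⋂ f ∈ 𝔉, {c | SemiOccurs R H f.2 c}ᶜ := by
    ext
    simp [Generated]
  rw [hinter]
  exact isClosed_biInter fun f hf => (isOpen_setOf_semiOccurs (h𝔉 f hf) f.2).isClosed_compl

lemma IsLocalMap.isCompact_image [Finite Q] (hS : R.IsRightGenSet S) {X Y : Set (M → Q)}
    (hX : IsClosed X) {Δ : (M → Q) → (M → Q)} {κ : ℕ} (hΔ : IsLocalMap R S H X Y Δ κ) :
    IsCompact (Δ '' X) := by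
  obtain ⟨-, N, hNball, -, δ, -, hΔx⟩ := hΔ
  have : Finite N := ((CellSpace.ball_finite hS R.m0 κ).subset hNball).to_subtype
  have hcont : Continuous fun (x : M → Q) (m : M) => δ fun n : N => x (R.nAct m n) :=
    continuous_pi fun m =>
      continuous_of_discreteTopology.comp (continuous_pi fun n => continuous_apply _)
  rw [image_congr fun x hx => funext (hΔx x hx)]
  exact hX.isCompact.image hcont

end Topology

lemma IsLocalMap.exists_forall_ball_ne [Finite Q] {R : CellSpace G M} {S : Set G}
    {H : Subgroup G} (hS : R.IsRightGenSet S) (hH : ∀ m : M, R.coord m ∈ H)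
    {X Y : Set (M → Q)} (hX : IsSubshift R H X) {Δ : (M → Q) → (M → Q)} {κ : ℕ}
    (hΔ : IsLocalMap R S H X Y Δ κ) {y : M → Q} (hy : y ∉ Δ '' X) :
    ∃ θ : ℕ, ∀ z ∈ Δ '' X, ∀ t : M, ∃ a ∈ R.ball S t θ, z a ≠ shiftAct R (R.coord t) y a := by
  let _ : TopologicalSpace Q := ⊥
  have : DiscreteTopology Q := ⟨rfl⟩
  obtain ⟨A, hA⟩ :=
    exists_finset_forall_ne_of_isClosed (hΔ.isCompact_image hS hX.isClosed).isClosed hy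
  refine ⟨A.sup (R.dist S R.m0), fun z hz t => ?_⟩
  obtain ⟨a, haA, hne⟩ := hA _ (hΔ.shiftAct_mem_image hH hX (inv_mem (hH t)) hz)
  refine ⟨R.act (R.coord t) a, ?_, by simpa [shiftAct] using hne⟩
  have hdist := CellSpace.dist_act hS (R.coord t) R.m0 a
  rw [R.coord_act] at hdist
  rw [CellSpace.mem_ball, hdist]
  exact Finset.le_sup (f := R.dist S R.m0) haA

lemma ncard_le_ncard_mul_pow_of_eqOn_compl {ι : Type*} [Finite ι] [Finite Q]
    {A B : Set (ι → Q)} {K : Set ι} (φ : (ι → Q) → (ι → Q)) (hφ : MapsTo φ A B)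
    (hK : ∀ q ∈ A, ∀ a ∉ K, φ q a = q a) : A.ncard ≤ B.ncard * Nat.card Q ^ K.ncard := by
  have hinj : InjOn (fun q => (φ q, K.domRestrict q)) A := by
    intro q hq q' hq' h
    simp only [Prod.mk.injEq] at h
    funext a
    by_cases ha : a ∈ K
    · exact congrFun h.2 ⟨a, ha⟩
    · rw [← hK q hq a ha, ← hK q' hq' a ha, h.1]
  calc A.ncard ≤ (B ×ˢ (univ : Set (K → Q))).ncard :=
        ncard_le_ncard_of_injOn _ (fun q hq => ⟨hφ hq, mem_univ _⟩) hinj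
    _ = B.ncard * Nat.card Q ^ K.ncard := by
        rw [ncard_prod, ncard_univ, Nat.card_fun, Nat.card_coe_set_eq]

section Counting

variable {R : CellSpace G M} {S : Set G} {H : Subgroup G} {Y : Set (M → Q)} {κ : ℕ}

lemma allowed_restrict {x : M → Q} (hx : x ∈ Y) (A : Set M) : Allowed R H Y (A.domRestrict x) :=
  ⟨x, hx, 1, one_mem H, fun a => by rw [R.one_act]; rfl⟩

lemma IsStronglyIrr.exists_eqOn_ball (hS : R.IsRightGenSet S) (hY : IsStronglyIrr R S H Y κ)
    {F : Set M} (hF : F.Finite) {x y : M → Q} (hx : x ∈ Y) (hy : y ∈ Y) (t : M) (θ : ℕ) :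
    ∃ w ∈ Y, (∀ a ∈ F, a ∉ R.ball S t (θ + κ) → w a = x a) ∧ ∀ a ∈ R.ball S t θ, w a = y a := by
  have hsep : ∀ a ∈ F \ R.ball S t (θ + κ), ∀ b ∈ R.ball S t θ, κ + 1 ≤ R.dist S a b := by
    intro a ha b hb
    have := CellSpace.dist_triangle hS t b a
    rw [CellSpace.dist_comm hS b a] at this
    have : ¬ R.dist S t a ≤ θ + κ := ha.2
    have : R.dist S t b ≤ θ := hb
    omega
  obtain ⟨w, hw, hwx, hwy⟩ := hY _ _ (hF.subset sdiff_subset) (CellSpace.ball_finite hS t θ) _ _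
    (allowed_restrict hx _) (allowed_restrict hy _) hsep
  exact ⟨w, hw, fun a ha ha' => congrFun hwx ⟨a, ha, ha'⟩, fun a ha => congrFun hwy ⟨a, ha⟩⟩

variable (R S Y) in
def avoidingPatterns (y : M → Q) (θ : ℕ) (F T : Set M) : Set (F → Q) :=
  {q ∈ restr F Y | ∀ t ∈ T, ∃ a : F, ↑a ∈ R.ball S t θ ∧ q a ≠ shiftAct R (R.coord t) y a}

-- Gluing the translate of `y` into `B(t, θ)` changes a pattern only on `B(t, θ + κ)`, so at most
-- `D` patterns avoiding `y` at `t` map to one matching it there.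
lemma succ_mul_ncard_avoidingPatterns_insert_le [Finite Q] (hS : R.IsRightGenSet S)
    (hY : IsStronglyIrr R S H Y κ) {F : Set M} (hF : F.Finite) {y : M → Q} {θ : ℕ} {T : Set M}
    {t : M} (htF : R.ball S t (θ + κ) ⊆ F)
    (hsep : ∀ t' ∈ T, Disjoint (R.ball S t' θ) (R.ball S t (θ + κ)))
    (hyt : shiftAct R (R.coord t) y ∈ Y) :
    (Nat.card Q ^ (R.ball S R.m0 (θ + κ)).ncard + 1) *
        (avoidingPatterns R S Y y θ F (insert t T)).ncard ≤
      Nat.card Q ^ (R.ball S R.m0 (θ + κ)).ncard * (avoidingPatterns R S Y y θ F T).ncard := by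
  have : Finite F := hF.to_subtype
  set D := Nat.card Q ^ (R.ball S R.m0 (θ + κ)).ncard
  set A := avoidingPatterns R S Y y θ F (insert t T)
  set B := {q ∈ avoidingPatterns R S Y y θ F T |
    ∀ a : F, ↑a ∈ R.ball S t θ → q a = shiftAct R (R.coord t) y a}
  have hAB : Disjoint A B := disjoint_left.mpr fun q hq hqB => by
    obtain ⟨a, ha, hne⟩ := hq.2 t (mem_insert t T)
    exact hne (hqB.2 a ha)
  have hA : A ⊆ avoidingPatterns R S Y y θ F T :=
    fun q hq => ⟨hq.1, fun t' ht' => hq.2 t' (mem_insert_of_mem t ht')⟩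
  have hglue : ∀ q ∈ A, ∃ w ∈ Y, (∀ a : F, ↑a ∉ R.ball S t (θ + κ) → w a = q a) ∧
      ∀ a ∈ R.ball S t θ, w a = shiftAct R (R.coord t) y a := by
    rintro q ⟨⟨x, hx, rfl⟩, -⟩
    obtain ⟨w, hw, hwx, hwy⟩ := hY.exists_eqOn_ball hS hF hx hyt t θ
    exact ⟨w, hw, fun a ha => hwx a a.2 ha, hwy⟩
  have : Nonempty (M → Q) := ⟨y⟩
  choose! w hw hwq hwy using hglue
  have hmaps : MapsTo (fun q : F → Q => F.domRestrict (w q)) A B := fun q hq =>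
    ⟨⟨⟨w q, hw q hq, rfl⟩, fun t' ht' => by
      obtain ⟨a, ha, hne⟩ := hq.2 t' (mem_insert_of_mem t ht')
      exact ⟨a, ha, by rwa [← hwq q hq a (disjoint_left.mp (hsep t' ht') ha)] at hne⟩⟩,
      fun a ha => hwy q hq a ha⟩
  have hAB_card : A.ncard ≤ B.ncard * D := by
    refine (ncard_le_ncard_mul_pow_of_eqOn_compl (K := Subtype.val ⁻¹' R.ball S t (θ + κ)) _
      hmaps hwq).trans_eq ?_
    rw [ncard_preimage_of_injective_subset_range Subtype.val_injective (by simpa using htF),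
      CellSpace.ncard_ball hS]
  calc (D + 1) * A.ncard = D * A.ncard + A.ncard := by ring
    _ ≤ D * A.ncard + D * B.ncard := by rw [mul_comm D B.ncard]; gcongr
    _ = D * (A ∪ B).ncard := by rw [ncard_union_eq hAB]; ring
    _ ≤ D * (avoidingPatterns R S Y y θ F T).ncard := by
        gcongr
        · exact toFinite _
        · exact union_subset hA (sep_subset _ _)

lemma pow_mul_ncard_avoidingPatterns_le [Finite Q] (hS : R.IsRightGenSet S)
    (hY : IsStronglyIrr R S H Y κ) {F : Set M} (hF : F.Finite) {y : M → Q} {θ : ℕ}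
    (T : Finset M) (hTF : ∀ t ∈ T, R.ball S t (θ + κ) ⊆ F)
    (hsep : (T : Set M).Pairwise fun t t' => Disjoint (R.ball S t' θ) (R.ball S t (θ + κ)))
    (hyT : ∀ t ∈ T, shiftAct R (R.coord t) y ∈ Y) :
    (Nat.card Q ^ (R.ball S R.m0 (θ + κ)).ncard + 1) ^ T.card *
        (avoidingPatterns R S Y y θ F T).ncard ≤
      (Nat.card Q ^ (R.ball S R.m0 (θ + κ)).ncard) ^ T.card * (restr F Y).ncard := by
  classical
  set D := Nat.card Q ^ (R.ball S R.m0 (θ + κ)).ncard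
  induction T using Finset.induction_on with
  | empty => simp [avoidingPatterns]
  | @insert t T ht ih =>
    rw [Finset.coe_insert, pairwise_insert] at hsep
    have hstep := succ_mul_ncard_avoidingPatterns_insert_le hS hY hF
      (hTF t (Finset.mem_insert_self t T))
      (fun t' ht' => (hsep.2 t' ht' fun h => ht (h ▸ ht')).1) (hyT t (Finset.mem_insert_self t T))
    have hih := ih (fun t' ht' => hTF t' (Finset.mem_insert_of_mem ht')) hsep.1
      (fun t' ht' => hyT t' (Finset.mem_insert_of_mem ht'))
    rw [Finset.coe_insert, Finset.card_insert_of_notMem ht]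
    calc (D + 1) ^ (T.card + 1) * (avoidingPatterns R S Y y θ F (insert t ↑T)).ncard
        = (D + 1) ^ T.card * ((D + 1) * (avoidingPatterns R S Y y θ F (insert t ↑T)).ncard) := by
          ring
      _ ≤ (D + 1) ^ T.card * (D * (avoidingPatterns R S Y y θ F T).ncard) := by gcongr
      _ = D * ((D + 1) ^ T.card * (avoidingPatterns R S Y y θ F T).ncard) := by ring
      _ ≤ D * (D ^ T.card * (restr F Y).ncard) := by gcongr
      _ = D ^ (T.card + 1) * (restr F Y).ncard := by ring

end Counting

lemma log_le_log_sub_of_pow_mul_le {D n z y : ℕ} (hD : 0 < D) (hz : 0 < z)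
    (h : (D + 1) ^ n * z ≤ D ^ n * y) :
    Real.log z ≤ Real.log y - n * (Real.log (D + 1) - Real.log D) := by
  have hy : 0 < y := Nat.pos_of_ne_zero (by rintro rfl; simp at h; omega)
  have hlog := Real.log_le_log (by positivity)
    (by exact_mod_cast h : ((D : ℝ) + 1) ^ n * z ≤ (D : ℝ) ^ n * y)
  rw [Real.log_mul (by positivity) (by positivity), Real.log_mul (by positivity) (by positivity),
    Real.log_pow, Real.log_pow] at hlog
  linarith

lemma log_div_le_log_div_sub {D n z y N β b : ℕ} (hD : 0 < D) (hz : 0 < z) (hβ : 0 < β)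
    (hcount : (D + 1) ^ n * z ≤ D ^ n * y) (hN : N ≤ n * β + b) (hb : 2 * b < N) :
    Real.log z / N ≤ Real.log y / N - (Real.log (D + 1) - Real.log D) / (2 * β) := by
  set c₀ := Real.log (D + 1) - Real.log D
  have hN0 : (0 : ℝ) < N := by exact_mod_cast (by omega : 0 < N)
  have hNn : (N : ℝ) ≤ 2 * β * n := by
    have : N ≤ 2 * (n * β) := by omega
    exact_mod_cast (by linarith : N ≤ 2 * β * n)
  have hc₀ : 0 ≤ c₀ := sub_nonneg.mpr (Real.log_le_log (by exact_mod_cast hD) (by linarith))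
  have hNc : (N : ℝ) * (c₀ / (2 * β)) ≤ n * c₀ := by
    rw [mul_div_assoc', div_le_iff₀ (by positivity)]
    nlinarith
  calc Real.log z / N ≤ (Real.log y - N * (c₀ / (2 * β))) / N := by
        gcongr
        linarith [log_le_log_sub_of_pow_mul_le hD hz hcount]
    _ = Real.log y / N - c₀ / (2 * β) := by field_simp

lemma limsup_lt_limsup_of_eventually_le_sub {ι : Type*} {l : Filter ι} [l.NeBot] {f g : ι → ℝ}
    {c : ℝ} (hc : 0 < c) (hf : l.IsBoundedUnder (· ≥ ·) f) (hg : l.IsBoundedUnder (· ≤ ·) g)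
    (h : ∀ᶠ i in l, f i ≤ g i - c) : limsup f l < limsup g l := by
  have hg_cobdd : l.IsCoboundedUnder (· ≤ ·) g := by
    obtain ⟨a, ha⟩ := hf
    refine (isBoundedUnder_of_eventually_ge (a := a + c) ?_).isCoboundedUnder_le
    filter_upwards [eventually_map.mp ha, h] with i hai hi
    linarith
  have hg_sub : l.IsBoundedUnder (· ≤ ·) fun i => g i - c := by
    obtain ⟨b, hb⟩ := hg
    refine isBoundedUnder_of_eventually_le (a := b - c) ?_
    filter_upwards [eventually_map.mp hb] with i hi
    linarith
  calc limsup f l ≤ limsup (fun i => g i - c) l :=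
        limsup_le_limsup h hf.isCoboundedUnder_le hg_sub
    _ = limsup g l - c := limsup_sub_const l g c hg hg_cobdd
    _ < limsup g l := sub_lt_self _ hc

lemma log_ncard_restr_div_le [Finite Q] (X : Set (M → Q)) (A : Set M) :
    Real.log (restr A X).ncard / A.ncard ≤ Real.log (Nat.card Q) := by
  rcases (restr A X).eq_empty_or_nonempty with h | h
  · simp [h, Real.log_natCast_nonneg]
  rcases Nat.eq_zero_or_pos A.ncard with h0 | hpos
  · simp [h0, Real.log_natCast_nonneg]
  have : Finite A := (finite_of_ncard_pos hpos).to_subtype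
  rw [div_le_iff₀' (by exact_mod_cast hpos)]
  calc Real.log (restr A X).ncard ≤ Real.log (Nat.card Q ^ A.ncard : ℕ) := by
        gcongr
        · exact_mod_cast (ncard_pos (toFinite _)).mpr h
        · calc (restr A X).ncard ≤ (univ : Set (A → Q)).ncard := ncard_le_ncard (subset_univ _)
            _ = Nat.card Q ^ A.ncard := by rw [ncard_univ, Nat.card_fun, Nat.card_coe_set_eq]
    _ = A.ncard * Real.log (Nat.card Q) := by rw [Nat.cast_pow, Real.log_pow]

lemma IsFolnerNet.eventually_two_mul_ncard_bdry_lt {R : CellSpace G M} {S : Set G} {I : Type*}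
    [Preorder I] {F : I → Set M} (hF : IsFolnerNet R S F) (ρ : ℕ) :
    ∀ᶠ i in atTop, 2 * (R.bdry S (F i) ρ).ncard < (F i).ncard := by
  filter_upwards [(hF.2.2 ρ).eventually_lt_const (by norm_num : (0 : ℝ) < 1 / 2)] with i hi
  have hpos : (0 : ℝ) < (F i).ncard := by exact_mod_cast (ncard_pos (hF.2.1 i)).mpr (hF.1 i)
  rw [div_lt_iff₀ hpos] at hi
  exact_mod_cast (by linarith : 2 * ((R.bdry S (F i) ρ).ncard : ℝ) < (F i).ncard)

section Entropy

variable {R : CellSpace G M} {S : Set G} {H : Subgroup G} {Y : Set (M → Q)} {κ : ℕ}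

lemma pow_mul_ncard_restr_le [Finite Q] (hS : R.IsRightGenSet S) (hY : IsStronglyIrr R S H Y κ)
    {F : Set M} (hF : F.Finite) {Z : Set (M → Q)} (hZY : Z ⊆ Y) {y : M → Q} {θ : ℕ}
    (T : Finset M) (hTF : ∀ t ∈ T, R.ball S t (θ + κ) ⊆ F)
    (hsep : (T : Set M).Pairwise fun t t' => Disjoint (R.ball S t' θ) (R.ball S t (θ + κ)))
    (hyT : ∀ t ∈ T, shiftAct R (R.coord t) y ∈ Y)
    (hZ : ∀ z ∈ Z, ∀ t ∈ T, ∃ a ∈ R.ball S t θ, z a ≠ shiftAct R (R.coord t) y a) :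
    (Nat.card Q ^ (R.ball S R.m0 (θ + κ)).ncard + 1) ^ T.card * (restr F Z).ncard ≤
      (Nat.card Q ^ (R.ball S R.m0 (θ + κ)).ncard) ^ T.card * (restr F Y).ncard := by
  have : Finite F := hF.to_subtype
  refine le_trans ?_ (pow_mul_ncard_avoidingPatterns_le hS hY hF T hTF hsep hyT)
  gcongr
  · exact toFinite _
  rintro _ ⟨z, hz, rfl⟩
  refine ⟨⟨z, hZY hz, rfl⟩, fun t ht => ?_⟩
  obtain ⟨a, ha, hne⟩ := hZ z hz t ht
  exact ⟨⟨a, hTF t ht (CellSpace.ball_mono t (Nat.le_add_right θ κ) ha)⟩, ha, hne⟩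

theorem eventually_log_ncard_restr_le_sub [Finite Q] {I : Type*} [Preorder I]
    (hS : R.IsRightGenSet S) (hY : IsStronglyIrr R S H Y κ) {F : I → Set M}
    (hF : IsFolnerNet R S F) {Z : Set (M → Q)} (hZY : Z ⊆ Y) (hZ : Z.Nonempty) {y : M → Q}
    (hyY : ∀ t, shiftAct R (R.coord t) y ∈ Y) {θ : ℕ}
    (hθ : ∀ z ∈ Z, ∀ t, ∃ a ∈ R.ball S t θ, z a ≠ shiftAct R (R.coord t) y a) :
    ∃ c > 0, ∀ᶠ i in atTop, Real.log (restr (F i) Z).ncard / (F i).ncard ≤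
      Real.log (restr (F i) Y).ncard / (F i).ncard - c := by
  have : Nonempty Q := ⟨hZ.some R.m0⟩
  set D := Nat.card Q ^ (R.ball S R.m0 (θ + κ)).ncard
  set β := (R.ball S R.m0 (2 * θ + κ)).ncard
  have hD : 0 < D := pow_pos Nat.card_pos _
  have hβ : 0 < β :=
    (ncard_pos (CellSpace.ball_finite hS _ _)).mpr ⟨_, CellSpace.self_mem_ball _ _⟩
  obtain ⟨T, hTsep, hTcov⟩ := CellSpace.exists_separated_net hS (D := 2 * θ + κ + 1) (by omega)
  refine ⟨(Real.log (D + 1) - Real.log D) / (2 * β),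
    div_pos (sub_pos.mpr (Real.log_lt_log (by positivity) (by linarith))) (by positivity), ?_⟩
  filter_upwards [hF.eventually_two_mul_ncard_bdry_lt (θ + κ + (2 * θ + κ))] with i hi
  have hTi_fin : {t ∈ T | R.ball S t (θ + κ) ⊆ F i}.Finite :=
    (hF.2.1 i).subset fun t ht => ht.2 (CellSpace.self_mem_ball t _)
  obtain ⟨Ti, hTi⟩ := hTi_fin.exists_finset_coe
  have hTiF : ∀ t ∈ Ti, R.ball S t (θ + κ) ⊆ F i := fun t ht => by
    rw [← Finset.mem_coe, hTi] at ht
    exact ht.2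
  have hTi_sep : (Ti : Set M).Pairwise fun t t' => Disjoint (R.ball S t' θ) (R.ball S t (θ + κ)) :=
    (hTsep.mono (hTi ▸ sep_subset _ _)).imp fun t t' h =>
      CellSpace.disjoint_ball_ball hS (by rw [CellSpace.dist_comm hS]; omega)
  have hTi_cov : R.inter S (F i) (θ + κ + (2 * θ + κ)) ⊆ ⋃ t ∈ Ti, R.ball S t (2 * θ + κ) := by
    have hcov : ∀ m, ∃ t ∈ T, R.dist S t m ≤ 2 * θ + κ := fun m => by
      obtain ⟨t, ht, htm⟩ := hTcov m
      exact ⟨t, ht, by omega⟩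
    simpa only [← hTi, Finset.mem_coe] using
      CellSpace.inter_subset_biUnion_ball hS hcov (F i) (θ + κ)
  have : Finite (F i) := (hF.2.1 i).to_subtype
  exact log_div_le_log_div_sub hD ((ncard_pos (toFinite _)).mpr (hZ.image _)) hβ
    (pow_mul_ncard_restr_le hS hY (hF.2.1 i) hZY Ti hTiF hTi_sep (fun t _ => hyY t)
      fun z hz t _ => hθ z hz t)
    (CellSpace.ncard_le_card_mul_add_ncard_bdry hS (hF.2.1 i) hTi_cov) hi

end Entropy

theorem stmt13_general {I : Type*} [Nonempty I] [SemilatticeSup I]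
    [Finite Q] (R : CellSpace G M) (S : Set G) (hS : R.IsRightGenSet S)
    (H : Subgroup G) (hH : ∀ m : M, R.coord m ∈ H)
    (F : I → Set M) (hF : IsFolnerNet R S F)
    (X : Set (M → Q)) (hX : IsSubshift R H X) (hXne : X.Nonempty)
    (Y : Set (M → Q)) (hY : IsSubshift R H Y)
    (hYsi : ∃ κ : ℕ, IsStronglyIrr R S H Y κ)
    (Δ : (M → Q) → (M → Q)) (hΔ : ∃ κ : ℕ, IsLocalMap R S H X Y Δ κ)
    (hns : Δ '' X ≠ Y) :
    entropy R S F (Δ '' X) < entropy R S F Y := by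
  obtain ⟨κ, hκ⟩ := hYsi
  obtain ⟨κΔ, hΔ⟩ := hΔ
  have hZY : Δ '' X ⊆ Y := hΔ.1.image_subset
  obtain ⟨y, hyY, hyZ⟩ : ∃ y ∈ Y, y ∉ Δ '' X := not_subset.mp fun h => hns (hZY.antisymm h)
  obtain ⟨θ, hθ⟩ := hΔ.exists_forall_ball_ne hS hH hX hyZ
  obtain ⟨c, hc, hle⟩ := eventually_log_ncard_restr_le_sub hS hκ hF hZY (hXne.image Δ)
    (fun t => hY.shiftAct_mem hyY (hH t)) hθ
  exact limsup_lt_limsup_of_eventually_le_sub hc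
    (isBoundedUnder_of_eventually_ge (Eventually.of_forall fun i => by positivity))
    (isBoundedUnder_of_eventually_le (Eventually.of_forall fun i => log_ncard_restr_div_le Y (F i)))
    hle

theorem stmt13 {I : Type*} [Nonempty I] [SemilatticeSup I]
    [Finite Q] (R : CellSpace G M) (S : Set G) (hS : R.IsRightGenSet S)
    (H : Subgroup G) (hH : ∀ m : M, R.coord m ∈ H)
    (hAm : RightAmenable R) (F : I → Set M) (hF : IsFolnerNet R S F)
    (hM : Infinite M)
    (X : Set (M → Q)) (hX : IsSubshift R H X) (hXne : X.Nonempty)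
    (Y : Set (M → Q)) (hY : IsSubshift R H Y)
    (hYsi : ∃ κ : ℕ, IsStronglyIrr R S H Y κ)
    (Δ : (M → Q) → (M → Q)) (hΔ : ∃ κ : ℕ, IsLocalMap R S H X Y Δ κ)
    (hns : Δ '' X ≠ Y) :
    entropy R S F (Δ '' X) < entropy R S F Y :=
  stmt13_general R S hS H hH F hF X hX hXne Y hY hYsi Δ hΔ hns

end GoE
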